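/- On ℝ², the functions f(x,ξ) = x and g(x,ξ) = x³ have the same commutant with respect to the standard Poisson bracket {f,g} = ∂f/∂ξ ∂g/∂x − ∂f/∂x ∂g/∂ξ on any open subset U of ℝ²: a smooth function h on U satisfies {x, h} = 0 if and only if {x³, h} = 0. (Hence the systems x and x³ are weakly equivalent even though they have different singularity types.) -/
import Mathlib


/-- The standard Poisson bracket on ℝ² with coordinates (x, ξ):
`{f,g} = ∂f/∂ξ ∂g/∂x − ∂f/∂x ∂g/∂ξ`. -/
noncomputable def pb2 (f g : ℝ × ℝ → ℝ) (p : ℝ × ℝ) : ℝ :=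
  fderiv ℝ f p (0, 1) * fderiv ℝ g p (1, 0)
    - fderiv ℝ f p (1, 0) * fderiv ℝ g p (0, 1)

lemma cube_hasFDerivAt (p : ℝ × ℝ) :
    HasFDerivAt (fun q : ℝ × ℝ => q.1 ^ 3)
      ((3 * p.1 ^ 2) • ContinuousLinearMap.fst ℝ ℝ ℝ) p :=
  (hasDerivAt_pow 3 p.1).comp_hasFDerivAt p hasFDerivAt_fst

lemma pb2_x (h : ℝ × ℝ → ℝ) (p : ℝ × ℝ) :
    pb2 (fun q => q.1) h p = -(fderiv ℝ h p (0, 1)) := by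
  simp [pb2, hasFDerivAt_fst.fderiv]

lemma pb2_x3 (h : ℝ × ℝ → ℝ) (p : ℝ × ℝ) :
    pb2 (fun q => q.1 ^ 3) h p = -(3 * p.1 ^ 2 * fderiv ℝ h p (0, 1)) := by
  simp [pb2, (cube_hasFDerivAt p).fderiv]

/-- on any open `U ⊆ ℝ²` the systems `x` and `x³` have the same
commutant: for smooth `h`, `{x,h} = 0` on `U` iff `{x³,h} = 0` on `U`
(weak equivalence of `x` and `x³`). -/
theorem commutant_x_eq_commutant_x_cubed
    (U : Set (ℝ × ℝ)) (hU : IsOpen U)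
    (h : ℝ × ℝ → ℝ) (hh : ContDiffOn ℝ (⊤ : ℕ∞) h U) :
    (∀ p ∈ U, pb2 (fun q => q.1) h p = 0) ↔
    (∀ p ∈ U, pb2 (fun q => q.1 ^ 3) h p = 0) := by
  constructor
  · intro H p hp
    rw [pb2_x3]
    have := H p hp
    rw [pb2_x] at this
    have : fderiv ℝ h p (0, 1) = 0 := by linarith
    rw [this]; ring
  · intro H p hp
    rw [pb2_x]
    -- F is continuous on U
    have hF : ContinuousOn (fun q => fderiv ℝ h q (0, 1)) U :=
      (hh.continuousOn_fderiv_of_isOpen hU (by simp)).clm_apply continuousOn_const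
    -- F vanishes at points of U with nonzero first coordinate
    have hzero : ∀ q ∈ U, q.1 ≠ 0 → fderiv ℝ h q (0, 1) = 0 := by
      intro q hq hq1
      have := H q hq
      rw [pb2_x3] at this
      have h3 : 3 * q.1 ^ 2 ≠ 0 := by positivity
      have : 3 * q.1 ^ 2 * fderiv ℝ h q (0, 1) = 0 := by linarith
      exact (mul_eq_zero.mp this).resolve_left h3
    by_cases hp1 : p.1 = 0
    · -- approach p along the sequence (1/(n+1), p.2)
      set q : ℕ → ℝ × ℝ := fun n => (1 / (n + 1 : ℝ), p.2) with hq
      have htend : Filter.Tendsto q Filter.atTop (nhds p) := by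
        have h1 : Filter.Tendsto (fun n : ℕ => 1 / (n + 1 : ℝ)) Filter.atTop
            (nhds 0) := tendsto_one_div_add_atTop_nhds_zero_nat
        have : Filter.Tendsto q Filter.atTop (nhds (0, p.2)) :=
          h1.prodMk_nhds tendsto_const_nhds
        have hpp : p = ((0 : ℝ), p.2) := by
          ext <;> simp [hp1]
        rwa [hpp]
      have hmemU : ∀ᶠ n in Filter.atTop, q n ∈ U :=
        htend.eventually (hU.eventually_mem hp)
      have htendW : Filter.Tendsto q Filter.atTop (nhdsWithin p U) := by
        rw [tendsto_nhdsWithin_iff]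
        exact ⟨htend, hmemU⟩
      have hcont := (hF p hp).tendsto.comp htendW
      have hFzero : ∀ᶠ n in Filter.atTop,
          (fun q => fderiv ℝ h q (0, 1)) (q n) = 0 := by
        filter_upwards [hmemU] with n hn
        refine hzero (q n) hn ?_
        simp [hq]
        positivity
      have : fderiv ℝ h p (0, 1) = 0 :=
        tendsto_nhds_unique hcont (Filter.Tendsto.congr'
          (Filter.EventuallyEq.symm hFzero) tendsto_const_nhds)
      rw [this]; ring
    · rw [hzero p hp hp1]; ring
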